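/- A pair (d, D) of linear maps on V is a biderivation of the Leibniz algebra L₁₇ if and only if there exist complex numbers a, b, p, q, r, s, u, v, w, z such that d(e₁) = a·e₁ + p·e₃ + q·e₄, d(e₂) = b·e₂ + r·e₃ + s·e₄, d(e₃) = (a+b)·e₃, d(e₄) = (a+b)·e₄, D(e₁) = a·e₁ + u·e₃ + v·e₄, D(e₂) = b·e₂ + w·e₃ + z·e₄, D(e₃) = b·e₃ − a·e₄, and D(e₄) = −b·e₃ + a·e₄. Consequently, the space of biderivations of L₁₇ is a 10-dimensional linear subspace of End(V) × End(V). -/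

import Mathlib

/-- `V = ℂ⁴`. -/
abbrev V : Type := Fin 4 → ℂ

/-- standard basis: `e 0 = e₁`, ..., `e 3 = e₄`. -/
def e (i : Fin 4) : V := Pi.single i 1

/-- Bracket of the Leibniz algebra `L₁₇`:
`⟦e₁,e₂⟧ = e₃`, `⟦e₂,e₁⟧ = e₄`, all other basis products zero. -/
def br (x y : V) : V :=
  (x 0 * y 1) • e 2 + (x 1 * y 0) • e 3

/-- A derivation. -/
def IsDer (d : V →ₗ[ℂ] V) : Prop :=
  ∀ x y : V, d (br x y) = br (d x) y + br x (d y)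

/-- An antiderivation. -/
def IsAntiDer (D : V →ₗ[ℂ] V) : Prop :=
  ∀ x y : V, D (br x y) = br x (D y) - br y (D x)

/-- A biderivation: a pair of a derivation and an antiderivation satisfying
`⟦d(x),y⟧ = ⟦D(x),y⟧` for all `x, y`. -/
def IsBider (d D : V →ₗ[ℂ] V) : Prop :=
  IsDer d ∧ IsAntiDer D ∧ ∀ x y : V, br (d x) y = br (D x) y

/-! ### Auxiliary lemmas -/

lemma e_apply (i j : Fin 4) : e i j = if j = i then 1 else 0 := by
  simp [e, Pi.single_apply]

lemma Vdecomp (x : V) : x = x 0 • e 0 + x 1 • e 1 + x 2 • e 2 + x 3 • e 3 := by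
  funext k; fin_cases k <;> simp [e_apply]

lemma apply_decomp (f : V →ₗ[ℂ] V) (x : V) :
    f x = x 0 • f (e 0) + x 1 • f (e 1) + x 2 • f (e 2) + x 3 • f (e 3) := by
  conv_lhs => rw [Vdecomp x]
  simp

lemma bider_iff (d D : V →ₗ[ℂ] V) : IsBider d D ↔ ∃ a b p q r s u v w z : ℂ,
      d (e 0) = a • e 0 + p • e 2 + q • e 3 ∧
      d (e 1) = b • e 1 + r • e 2 + s • e 3 ∧
      d (e 2) = (a + b) • e 2 ∧
      d (e 3) = (a + b) • e 3 ∧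
      D (e 0) = a • e 0 + u • e 2 + v • e 3 ∧
      D (e 1) = b • e 1 + w • e 2 + z • e 3 ∧
      D (e 2) = b • e 2 - a • e 3 ∧
      D (e 3) = -b • e 2 + a • e 3 := by
  constructor
  · rintro ⟨hder, hanti, hcomp⟩
    have h00 := congrFun (hder (e 0) (e 0)) 2
    simp [br, e_apply] at h00
    have h11 := congrFun (hder (e 1) (e 1)) 2
    simp [br, e_apply] at h11
    have h01 := hder (e 0) (e 1)
    simp [br, e_apply] at h01
    have h10 := hder (e 1) (e 0)
    simp [br, e_apply] at h10
    have hc0 := congrFun (hcomp (e 0) (e 1)) 2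
    simp [br, e_apply] at hc0
    have hc1 := congrFun (hcomp (e 1) (e 0)) 3
    simp [br, e_apply] at hc1
    have hc2 := congrFun (hcomp (e 0) (e 0)) 3
    simp [br, e_apply] at hc2
    have hc3 := congrFun (hcomp (e 1) (e 1)) 2
    simp [br, e_apply] at hc3
    have hA01 := hanti (e 0) (e 1)
    simp [br, e_apply] at hA01
    have hA10 := hanti (e 1) (e 0)
    simp [br, e_apply] at hA10
    refine ⟨d (e 0) 0, d (e 1) 1, d (e 0) 2, d (e 0) 3, d (e 1) 2, d (e 1) 3,
      D (e 0) 2, D (e 0) 3, D (e 1) 2, D (e 1) 3, ?_, ?_, ?_, ?_, ?_, ?_, ?_, ?_⟩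
    · funext k; fin_cases k <;> simp [e_apply, ← h00]
    · funext k; fin_cases k <;> simp [e_apply, ← h11]
    · rw [h01]; funext k; fin_cases k <;> simp [e_apply]
    · rw [h10]; funext k; fin_cases k <;> simp [e_apply] <;> ring
    · funext k; fin_cases k <;> simp [e_apply, ← hc0, ← hc2, ← h00]
    · funext k; fin_cases k <;> simp [e_apply, ← hc1, ← hc3, ← h11]
    · rw [hA01]; funext k; fin_cases k <;> simp [e_apply, ← hc0, ← hc1]
    · rw [hA10]; funext k; fin_cases k <;> simp [e_apply, ← hc0, ← hc1]
  · rintro ⟨a, b, p, q, r, s, u, v, w, z, h0, h1, h2, h3, g0, g1, g2, g3⟩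
    have dx : ∀ x : V, d x 0 = a * x 0 ∧ d x 1 = b * x 1 := by
      intro x
      rw [apply_decomp d x, h0, h1, h2, h3]
      constructor <;> simp [e_apply] <;> ring
    have Dx : ∀ x : V, D x 0 = a * x 0 ∧ D x 1 = b * x 1 := by
      intro x
      rw [apply_decomp D x, g0, g1, g2, g3]
      constructor <;> simp [e_apply] <;> ring
    have hbr : ∀ x y : V, br x y = (x 0 * y 1) • e 2 + (x 1 * y 0) • e 3 := fun _ _ => rfl
    refine ⟨?_, ?_, ?_⟩
    · intro x y
      rw [hbr x y, map_add, map_smul, map_smul, h2, h3,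
        hbr (d x) y, hbr x (d y), (dx x).1, (dx x).2, (dx y).1, (dx y).2]
      funext k; fin_cases k <;> simp [e_apply] <;> ring
    · intro x y
      rw [hbr x y, map_add, map_smul, map_smul, g2, g3,
        hbr x (D y), hbr y (D x), (Dx x).1, (Dx x).2, (Dx y).1, (Dx y).2]
      funext k; fin_cases k <;> simp [e_apply] <;> ring
    · intro x y
      rw [hbr (d x) y, hbr (D x) y, (dx x).1, (dx x).2, (Dx x).1, (Dx x).2]

noncomputable def constr4 : (Fin 4 → V) ≃ₗ[ℂ] (V →ₗ[ℂ] V) := (Pi.basisFun ℂ (Fin 4)).constr ℂ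

lemma constr4_e (v : Fin 4 → V) (i : Fin 4) : constr4 v (e i) = v i := by
  have h := (Pi.basisFun ℂ (Fin 4)).constr_basis ℂ v i
  rwa [Pi.basisFun_apply] at h

lemma constr4_eq_iff (v : Fin 4 → V) (f : V →ₗ[ℂ] V) :
    constr4 v = f ↔ ∀ i, f (e i) = v i := by
  constructor
  · rintro rfl i; exact constr4_e v i
  · intro h
    apply (Pi.basisFun ℂ (Fin 4)).ext
    intro i
    rw [Pi.basisFun_apply]
    rw [show (Pi.single i 1 : V) = e i from rfl, constr4_e, h i]

def dvals (c : Fin 10 → ℂ) : Fin 4 → V :=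
  ![c 0 • e 0 + c 2 • e 2 + c 3 • e 3,
    c 1 • e 1 + c 4 • e 2 + c 5 • e 3,
    (c 0 + c 1) • e 2,
    (c 0 + c 1) • e 3]

def Dvals (c : Fin 10 → ℂ) : Fin 4 → V :=
  ![c 0 • e 0 + c 6 • e 2 + c 7 • e 3,
    c 1 • e 1 + c 8 • e 2 + c 9 • e 3,
    c 1 • e 2 - c 0 • e 3,
    -c 1 • e 2 + c 0 • e 3]

def F : (Fin 10 → ℂ) →ₗ[ℂ] (Fin 4 → V) × (Fin 4 → V) where
  toFun c := (dvals c, Dvals c)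
  map_add' c c' := by
    refine Prod.ext ?_ ?_ <;> funext i <;> fin_cases i <;> funext k <;>
      simp [dvals, Dvals, e_apply] <;> split_ifs <;> ring
  map_smul' m c := by
    refine Prod.ext ?_ ?_ <;> funext i <;> fin_cases i <;> funext k <;>
      simp [dvals, Dvals, e_apply] <;> split_ifs <;> ring

noncomputable def Phi : (Fin 10 → ℂ) →ₗ[ℂ] ((V →ₗ[ℂ] V) × (V →ₗ[ℂ] V)) :=
  ((constr4.prodCongr constr4).toLinearMap).comp F

lemma Phi_inj : Function.Injective Phi := by
  have hF : Function.Injective F := by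
    intro c c' h
    have h1 : dvals c = dvals c' := congrArg Prod.fst h
    have h2 : Dvals c = Dvals c' := congrArg Prod.snd h
    funext j
    fin_cases j
    · exact (by simpa [dvals, e_apply] using congrFun (congrFun h1 0) 0 : c 0 = c' 0)
    · exact (by simpa [dvals, e_apply] using congrFun (congrFun h1 1) 1 : c 1 = c' 1)
    · exact (by simpa [dvals, e_apply] using congrFun (congrFun h1 0) 2 : c 2 = c' 2)
    · exact (by simpa [dvals, e_apply] using congrFun (congrFun h1 0) 3 : c 3 = c' 3)
    · exact (by simpa [dvals, e_apply] using congrFun (congrFun h1 1) 2 : c 4 = c' 4)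
    · exact (by simpa [dvals, e_apply] using congrFun (congrFun h1 1) 3 : c 5 = c' 5)
    · exact (by simpa [Dvals, e_apply] using congrFun (congrFun h2 0) 2 : c 6 = c' 6)
    · exact (by simpa [Dvals, e_apply] using congrFun (congrFun h2 0) 3 : c 7 = c' 7)
    · exact (by simpa [Dvals, e_apply] using congrFun (congrFun h2 1) 2 : c 8 = c' 8)
    · exact (by simpa [Dvals, e_apply] using congrFun (congrFun h2 1) 3 : c 9 = c' 9)
  exact ((constr4.prodCongr constr4).injective.comp hF : _)

lemma mem_range_iff (d D : V →ₗ[ℂ] V) :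
    (d, D) ∈ LinearMap.range Phi ↔ ∃ a b p q r s u v w z : ℂ,
      d (e 0) = a • e 0 + p • e 2 + q • e 3 ∧
      d (e 1) = b • e 1 + r • e 2 + s • e 3 ∧
      d (e 2) = (a + b) • e 2 ∧
      d (e 3) = (a + b) • e 3 ∧
      D (e 0) = a • e 0 + u • e 2 + v • e 3 ∧
      D (e 1) = b • e 1 + w • e 2 + z • e 3 ∧
      D (e 2) = b • e 2 - a • e 3 ∧
      D (e 3) = -b • e 2 + a • e 3 := by
  constructor
  · rintro ⟨c, hc⟩
    have h1 : constr4 (dvals c) = d := congrArg Prod.fst hc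
    have h2 : constr4 (Dvals c) = D := congrArg Prod.snd hc
    refine ⟨c 0, c 1, c 2, c 3, c 4, c 5, c 6, c 7, c 8, c 9,
      ?_, ?_, ?_, ?_, ?_, ?_, ?_, ?_⟩ <;>
      first
        | (rw [← h1, constr4_e]; rfl)
        | (rw [← h2, constr4_e]; rfl)
  · rintro ⟨a, b, p, q, r, s, u, v, w, z, h0, h1, h2, h3, g0, g1, g2, g3⟩
    refine ⟨![a, b, p, q, r, s, u, v, w, z], ?_⟩
    have hd : constr4 (dvals ![a, b, p, q, r, s, u, v, w, z]) = d := by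
      rw [constr4_eq_iff]
      intro i
      fin_cases i
      · exact h0
      · exact h1
      · exact h2
      · exact h3
    have hD : constr4 (Dvals ![a, b, p, q, r, s, u, v, w, z]) = D := by
      rw [constr4_eq_iff]
      intro i
      fin_cases i
      · exact g0
      · exact g1
      · exact g2
      · exact g3
    exact Prod.ext hd hD

theorem biderivations_of_L17 :
    (∀ d D : V →ₗ[ℂ] V, IsBider d D ↔ ∃ a b p q r s u v w z : ℂ,
      d (e 0) = a • e 0 + p • e 2 + q • e 3 ∧
      d (e 1) = b • e 1 + r • e 2 + s • e 3 ∧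
      d (e 2) = (a + b) • e 2 ∧
      d (e 3) = (a + b) • e 3 ∧
      D (e 0) = a • e 0 + u • e 2 + v • e 3 ∧
      D (e 1) = b • e 1 + w • e 2 + z • e 3 ∧
      D (e 2) = b • e 2 - a • e 3 ∧
      D (e 3) = -b • e 2 + a • e 3) ∧
    ∃ S : Submodule ℂ ((V →ₗ[ℂ] V) × (V →ₗ[ℂ] V)),
      (S : Set ((V →ₗ[ℂ] V) × (V →ₗ[ℂ] V))) = {p | IsBider p.1 p.2} ∧
      Module.finrank ℂ S = 10 := by
  refine ⟨bider_iff, LinearMap.range Phi, ?_, ?_⟩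
  · ext x
    obtain ⟨d, D⟩ := x
    rw [SetLike.mem_coe, Set.mem_setOf_eq, bider_iff]
    exact mem_range_iff d D
  · rw [LinearMap.finrank_range_of_inj Phi_inj]
    simp
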